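/- Let W : Δ_{[a,b]} → [0,∞) be a superadditive control (i.e. W_{s,u} + W_{u,t} ≤ W_{s,t} for s ≤ u ≤ t) with W continuous and W_{s,s} = 0. Fix χ > 0 and exponent p > 0. Define greedy times τ₀ := a and τ_{n+1} := sup{τ ∈ [τ_n, b] : W_{τ_n,τ}^{1/p} ≤ χ}, and let N := inf{n > 0 : τ_n = b} be the number of greedy steps. Then N ≤ W_{a,b} · χ^{-p} + 1. -/

import Mathlib

/-!
Each greedy step either reaches `b` or, by continuity of `W`, stops exactly where
`W_{τ_j, τ_{j+1}} = χ^p`. Hence the first `N - 1` steps each carry weight `χ^p`, and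
superadditivity bounds their total by `W_{a,b}`, i.e. `(N - 1) χ^p ≤ W_{a,b}`.
-/

open Set Finset

section SublevelSup

variable {f : ℝ → ℝ} {s b c : ℝ}

theorem csSup_sublevel_mem (hf : Continuous f) (hsb : s ≤ b) (hfs : f s ≤ c) :
    sSup {u | u ∈ Icc s b ∧ f u ≤ c} ∈ {u | u ∈ Icc s b ∧ f u ≤ c} :=
  (isClosed_Icc.inter (isClosed_le hf continuous_const)).csSup_mem
    ⟨s, ⟨le_rfl, hsb⟩, hfs⟩ ⟨b, fun _ hu => hu.1.2⟩

theorem apply_csSup_sublevel_eq (hf : Continuous f) (hsb : s ≤ b) (hfs : f s ≤ c)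
    (hlt : sSup {u | u ∈ Icc s b ∧ f u ≤ c} < b) :
    f (sSup {u | u ∈ Icc s b ∧ f u ≤ c}) = c := by
  set t := sSup {u | u ∈ Icc s b ∧ f u ≤ c}
  obtain ⟨⟨hst, -⟩, hft⟩ := csSup_sublevel_mem hf hsb hfs
  refine le_antisymm hft (not_lt.mp fun hft_lt => ?_)
  -- `f < c` persists slightly to the right of `t`, contradicting maximality of `t`.
  have hright : ∀ᶠ u in nhdsWithin t (Ioi t), f u < c ∧ u ∈ Ioo t b :=
    ((hf.continuousAt.eventually_lt continuousAt_const hft_lt).filter_mono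
      nhdsWithin_le_nhds).and (Ioo_mem_nhdsGT hlt)
  obtain ⟨u, hfu, htu, hub⟩ := hright.exists
  have hut : u ≤ t := le_csSup (s := {u | u ∈ Icc s b ∧ f u ≤ c}) ⟨b, fun _ hv => hv.1.2⟩
    ⟨⟨hst.trans htu.le, hub.le⟩, hfu.le⟩
  exact hut.not_gt htu

end SublevelSup

theorem sum_le_of_superadditive {a b : ℝ} {W : ℝ → ℝ → ℝ}
    (hWsuper : ∀ s u t, a ≤ s → s ≤ u → u ≤ t → t ≤ b → W s u + W u t ≤ W s t)
    {τ : ℕ → ℝ} (hτ : Monotone τ) (hτa : a ≤ τ 0) (hτb : ∀ n, τ n ≤ b)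
    (hdiag : W (τ 0) (τ 0) = 0) (k : ℕ) :
    ∑ j ∈ range k, W (τ j) (τ (j + 1)) ≤ W (τ 0) (τ k) := by
  induction k with
  | zero => simp [hdiag]
  | succ k ih =>
    rw [sum_range_succ]
    linarith [hWsuper (τ 0) (τ k) (τ (k + 1)) hτa (hτ (Nat.zero_le k))
      (hτ k.le_succ) (hτb (k + 1))]

theorem greedy_step_spec {a b χ p : ℝ} {W : ℝ → ℝ → ℝ}
    (hWnonneg : ∀ s u, a ≤ s → s ≤ u → u ≤ b → 0 ≤ W s u)
    (hWcont : Continuous fun p : ℝ × ℝ => W p.1 p.2)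
    (hWdiag : ∀ s, a ≤ s → s ≤ b → W s s = 0)
    (hχ : 0 < χ) (hp : 0 < p) {s t : ℝ} (hs : s ∈ Icc a b)
    (ht : t = sSup {u : ℝ | u ∈ Icc s b ∧ (W s u) ^ (1 / p) ≤ χ}) :
    t ∈ Icc s b ∧ W s t ≤ χ ^ p ∧ (t < b → W s t = χ ^ p) := by
  have hset : {u : ℝ | u ∈ Icc s b ∧ (W s u) ^ (1 / p) ≤ χ} =
      {u | u ∈ Icc s b ∧ W s u ≤ χ ^ p} := by
    ext u
    simp only [mem_ofPred_eq, and_congr_right_iff]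
    intro hu
    rw [one_div, Real.rpow_inv_le_iff_of_pos (hWnonneg s u hs.1 hu.1 hu.2) hχ.le hp]
  rw [hset] at ht
  subst ht
  have hf : Continuous (W s) := hWcont.comp (Continuous.prodMk_right s)
  have hfs : W s s ≤ χ ^ p := by
    rw [hWdiag s hs.1 hs.2]
    positivity
  obtain ⟨hmem, hle⟩ := csSup_sublevel_mem hf hs.2 hfs
  exact ⟨hmem, hle, apply_csSup_sublevel_eq hf hs.2 hfs⟩
/-- Greedy time estimate: for a continuous superadditive control `W` on `[a,b]` with
`W s s = 0`, the number `N` of greedy time steps with threshold `χ` (for the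
exponent `p`) satisfies `N ≤ W_{a,b} · χ^{-p} + 1`. -/
theorem greedy_times_bound (a b : ℝ) (hab : a ≤ b)
    (W : ℝ → ℝ → ℝ)
    (hWnonneg : ∀ s u, a ≤ s → s ≤ u → u ≤ b → 0 ≤ W s u)
    (hWsuper : ∀ s u t, a ≤ s → s ≤ u → u ≤ t → t ≤ b → W s u + W u t ≤ W s t)
    (hWcont : Continuous fun p : ℝ × ℝ => W p.1 p.2)
    (hWdiag : ∀ s, a ≤ s → s ≤ b → W s s = 0)
    (χ p : ℝ) (hχ : 0 < χ) (hp : 0 < p)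
    (τ : ℕ → ℝ) (hτ0 : τ 0 = a)
    (hτ : ∀ n : ℕ, τ (n + 1) = sSup {u : ℝ | u ∈ Set.Icc (τ n) b ∧ (W (τ n) u) ^ (1 / p) ≤ χ})
    (N : ℕ) (hN : N = sInf {n : ℕ | 0 < n ∧ τ n = b}) :
    (N : ℝ) ≤ W a b * χ ^ (-p) + 1 := by
  have hstep n (hn : τ n ∈ Icc a b) := greedy_step_spec hWnonneg hWcont hWdiag hχ hp hn (hτ n)
  have hτI : ∀ n, τ n ∈ Icc a b := by
    intro n
    induction n with
    | zero => rw [hτ0]; exact left_mem_Icc.mpr hab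
    | succ n ih => exact ⟨ih.1.trans (hstep n ih).1.1, (hstep n ih).1.2⟩
  have hmono : Monotone τ := monotone_nat_of_le_succ fun n => (hstep n (hτI n)).1.1
  have hfull : ∀ j ∈ range (N - 1), χ ^ p ≤ W (τ j) (τ (j + 1)) := by
    intro j hj
    have hjN : j + 1 < N := by have := mem_range.mp hj; omega
    have hnot : j + 1 ∉ {n : ℕ | 0 < n ∧ τ n = b} := Nat.notMem_of_lt_sInf (hN ▸ hjN)
    have hne : τ (j + 1) ≠ b := fun h => hnot ⟨j.succ_pos, h⟩
    exact ((hstep j (hτI j)).2.2 ((hτI (j + 1)).2.lt_of_ne hne)).ge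
  have hsteps : ((N - 1 : ℕ) : ℝ) * χ ^ p ≤ W a b := calc
    ((N - 1 : ℕ) : ℝ) * χ ^ p ≤ ∑ j ∈ range (N - 1), W (τ j) (τ (j + 1)) := by
      simpa using card_nsmul_le_sum _ _ _ hfull
    _ ≤ W a (τ (N - 1)) := hτ0 ▸ sum_le_of_superadditive hWsuper hmono (hτI 0).1
      (fun n => (hτI n).2) (hτ0 ▸ hWdiag a le_rfl hab) _
    _ ≤ W a b := by
      obtain ⟨h₁, h₂⟩ := hτI (N - 1)
      linarith [hWsuper a _ b le_rfl h₁ h₂ le_rfl, hWnonneg _ b h₁ h₂ le_rfl]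
  have hN_le : (N : ℝ) ≤ ((N - 1 : ℕ) : ℝ) + 1 := by norm_cast; omega
  rw [Real.rpow_neg hχ.le, ← div_eq_mul_inv]
  linarith [(le_div_iff₀ (by positivity)).mpr hsteps]
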